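/- For every real κ̃ ≥ 1 and all λ₁, λ₂ ∈ [0, 1], the inner product of the flag-register states satisfies ⟨h(λ₁), h(λ₂)⟩ ≥ 1 − ((6π² + 1)/24) · κ̃² · (λ₁ − λ₂)². -/

import Mathlib

/-- The filter function `f`: `f(λ) = 1/(2κ̃λ)` for `λ ≥ 1/κ̃`,
`f(λ) = -(1/2)cos(πκ̃λ)` for `1/(2κ̃) ≤ λ ≤ 1/κ̃`, and `f(λ) = 0` for `λ ≤ 1/(2κ̃)`. -/
noncomputable def ff (κ lam : ℝ) : ℝ :=
  if 1 / κ ≤ lam then 1 / (2 * κ * lam)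
  else if 1 / (2 * κ) ≤ lam then -(1 / 2) * Real.cos (Real.pi * κ * lam)
  else 0

/-- The filter function `g`: `g(λ) = 0` for `λ ≥ 1/κ̃`,
`g(λ) = (1/2)sin(πκ̃λ)` for `1/(2κ̃) ≤ λ ≤ 1/κ̃`, and `g(λ) = 1/2` for `λ ≤ 1/(2κ̃)`. -/
noncomputable def gg (κ lam : ℝ) : ℝ :=
  if 1 / κ ≤ lam then 0
  else if 1 / (2 * κ) ≤ lam then (1 / 2) * Real.sin (Real.pi * κ * lam)
  else 1 / 2

/-- The flag-register state `h(λ) = (f(λ), g(λ), √(1 - f(λ)² - g(λ)²))` as a vector in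
Euclidean `ℝ³`. -/
noncomputable def hvec (κ lam : ℝ) : EuclideanSpace ℝ (Fin 3) :=
  (WithLp.equiv 2 (Fin 3 → ℝ)).symm
    ![ff κ lam, gg κ lam, Real.sqrt (1 - ff κ lam ^ 2 - gg κ lam ^ 2)]

open scoped RealInnerProductSpace

/-!
Each `h(λ)` is a unit vector (as `f² + g² ≤ 1/4`), so `⟪h(λ₁), h(λ₂)⟫ = 1 - ‖h(λ₁) - h(λ₂)‖² / 2`
and it suffices to bound the three coordinate differences. The filters `f` and `g` are glued
continuously from pieces that are each `πκ̃/2`-Lipschitz, hence are `πκ̃/2`-Lipschitz on all of `ℝ`.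
Moreover `f² + g² = 1 / (4 max(κ̃λ, 1)²)` is `κ̃/2`-Lipschitz, and since `1 - f² - g² ≥ 3/4` the
square root costs a further factor `1/√3`. Hence
`‖h(λ₁) - h(λ₂)‖² ≤ (π²/4 + π²/4 + 1/12) κ̃² (λ₁ - λ₂)²`.
-/

open Real Set

theorem LipschitzOnWith.union_of_le {E : Type*} [PseudoMetricSpace E] {f : ℝ → E} {K : NNReal}
    {s t : Set ℝ} {c : ℝ} (hs : LipschitzOnWith K f s) (ht : LipschitzOnWith K f t)
    (hcs : c ∈ s) (hct : c ∈ t) (hs_le : ∀ x ∈ s, x ≤ c) (ht_ge : ∀ y ∈ t, c ≤ y) :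
    LipschitzOnWith K f (s ∪ t) := by
  have across : ∀ x ∈ s, ∀ y ∈ t, dist (f x) (f y) ≤ K * dist x y := fun x hx y hy => by
    have hxc := hs_le x hx
    have hcy := ht_ge y hy
    calc dist (f x) (f y) ≤ dist (f x) (f c) + dist (f c) (f y) := dist_triangle _ _ _
      _ ≤ K * dist x c + K * dist c y :=
        add_le_add (hs.dist_le_mul x hx c hcs) (ht.dist_le_mul c hct y hy)
      _ = K * dist x y := by
        simp only [Real.dist_eq, abs_of_nonpos (sub_nonpos.2 hxc),
          abs_of_nonpos (sub_nonpos.2 hcy), abs_of_nonpos (sub_nonpos.2 (hxc.trans hcy))]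
        ring
  refine LipschitzOnWith.of_dist_le_mul fun x hx y hy => ?_
  rcases hx with hx | hx <;> rcases hy with hy | hy
  · exact hs.dist_le_mul x hx y hy
  · exact across x hx y hy
  · rw [dist_comm, dist_comm x]
    exact across y hy x hx
  · exact ht.dist_le_mul x hx y hy

theorem LipschitzWith.of_Iic_Icc_Ici {E : Type*} [PseudoMetricSpace E] {f : ℝ → E} {K : NNReal}
    {a b : ℝ} (hab : a ≤ b) (h₁ : LipschitzOnWith K f (Iic a))
    (h₂ : LipschitzOnWith K f (Icc a b)) (h₃ : LipschitzOnWith K f (Ici b)) :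
    LipschitzWith K f := by
  have h₁₂ : LipschitzOnWith K f (Iic b) := by
    rw [← Iic_union_Icc_eq_Iic hab]
    exact h₁.union_of_le h₂ self_mem_Iic (left_mem_Icc.2 hab) (fun _ hx => hx)
      (fun _ hy => hy.1)
  rw [← lipschitzOnWith_univ, ← Iic_union_Ici (a := b)]
  exact h₁₂.union_of_le h₃ self_mem_Iic self_mem_Ici (fun _ hx => hx) (fun _ hy => hy)

theorem LipschitzWith.sub_sq_le {f : ℝ → ℝ} {K : NNReal} (hf : LipschitzWith K f) (a b : ℝ) :
    (f a - f b) ^ 2 ≤ K ^ 2 * (a - b) ^ 2 := by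
  have h := hf.dist_le_mul a b
  rw [Real.dist_eq, Real.dist_eq] at h
  rw [← sq_abs, ← sq_abs (a - b), ← mul_pow]
  exact pow_le_pow_left₀ (abs_nonneg _) h 2

theorem real_inner_eq_one_sub_norm_sub_sq_div_two {F : Type*} [NormedAddCommGroup F]
    [InnerProductSpace ℝ F] {x y : F} (hx : ‖x‖ = 1) (hy : ‖y‖ = 1) :
    inner ℝ x y = 1 - ‖x - y‖ ^ 2 / 2 := by
  rw [norm_sub_sq_real, hx, hy]
  ring

theorem abs_inv_sub_inv_le_of_one_le {u v : ℝ} (hu : 1 ≤ u) (hv : 1 ≤ v) :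
    |u⁻¹ - v⁻¹| ≤ |u - v| := by
  rw [inv_sub_inv (by positivity) (by positivity), abs_div, abs_sub_comm,
    abs_of_pos (by positivity : 0 < u * v)]
  exact div_le_self (abs_nonneg _) (one_le_mul_of_one_le_of_one_le hu hv)

theorem abs_inv_sq_sub_inv_sq_le_of_one_le {u v : ℝ} (hu : 1 ≤ u) (hv : 1 ≤ v) :
    |u⁻¹ ^ 2 - v⁻¹ ^ 2| ≤ 2 * |u - v| := by
  have hu' : u⁻¹ ≤ 1 := inv_le_one_of_one_le₀ hu
  have hv' : v⁻¹ ≤ 1 := inv_le_one_of_one_le₀ hv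
  rw [sq_sub_sq, abs_mul, abs_of_pos (by positivity : 0 < u⁻¹ + v⁻¹)]
  exact mul_le_mul (by linarith) (abs_inv_sub_inv_le_of_one_le hu hv) (abs_nonneg _) zero_le_two

theorem sq_sqrt_sub_sqrt_le {c u v : ℝ} (hc : 0 < c) (hu : c ≤ u) (hv : c ≤ v) :
    (√u - √v) ^ 2 ≤ (u - v) ^ 2 / (4 * c) := by
  have hsum : 2 * √c ≤ √u + √v := by
    linarith [Real.sqrt_le_sqrt hu, Real.sqrt_le_sqrt hv]
  have hprod : (√u - √v) * (√u + √v) = u - v := by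
    rw [mul_comm, ← sq_sub_sq, Real.sq_sqrt (hc.le.trans hu), Real.sq_sqrt (hc.le.trans hv)]
  have h4c : 4 * c = (2 * √c) ^ 2 := by rw [mul_pow, Real.sq_sqrt hc.le]; norm_num
  rw [le_div_iff₀ (by positivity), ← hprod, mul_pow, h4c]
  exact mul_le_mul_of_nonneg_left (pow_le_pow_left₀ (by positivity) hsum 2) (sq_nonneg _)

theorem LipschitzWith.abs_mul_comp_mul_sub_le {φ : ℝ → ℝ} (hφ : LipschitzWith 1 φ)
    (c r a b : ℝ) : |c * φ (r * a) - c * φ (r * b)| ≤ |c| * |r| * |a - b| := by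
  have h := hφ.dist_le_mul (r * a) (r * b)
  rw [Real.dist_eq, Real.dist_eq, NNReal.coe_one, one_mul, ← mul_sub, abs_mul] at h
  rw [← mul_sub, abs_mul, mul_assoc]
  exact mul_le_mul_of_nonneg_left h (abs_nonneg c)

section FilterFunctions

variable {κ lam : ℝ}

theorem ff_of_le (hκ : 0 < κ) (h : lam ≤ 1 / (2 * κ)) : ff κ lam = 0 := by
  have h₁ : ¬ 1 / κ ≤ lam := fun h' => by
    have : 1 / (2 * κ) < 1 / κ := by gcongr; linarith
    linarith
  rw [ff, if_neg h₁]
  split_ifs with h₂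
  · rw [le_antisymm h h₂, show π * κ * (1 / (2 * κ)) = π / 2 by field_simp, cos_pi_div_two,
      mul_zero]
  · rfl

theorem ff_of_mem_Icc (hκ : 0 < κ) (h : lam ∈ Icc (1 / (2 * κ)) (1 / κ)) :
    ff κ lam = -(1 / 2) * cos (π * κ * lam) := by
  rw [ff]
  split_ifs with h₁ h₂
  · rw [le_antisymm h.2 h₁, show π * κ * (1 / κ) = π by field_simp, cos_pi]
    field_simp
  · rfl
  · exact absurd h.1 h₂

theorem ff_of_ge (h : 1 / κ ≤ lam) : ff κ lam = (κ * lam)⁻¹ / 2 := by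
  rw [ff, if_pos h]
  field_simp

theorem gg_of_le (hκ : 0 < κ) (h : lam ≤ 1 / (2 * κ)) : gg κ lam = 1 / 2 := by
  have h₁ : ¬ 1 / κ ≤ lam := fun h' => by
    have : 1 / (2 * κ) < 1 / κ := by gcongr; linarith
    linarith
  rw [gg, if_neg h₁]
  split_ifs with h₂
  · rw [le_antisymm h h₂, show π * κ * (1 / (2 * κ)) = π / 2 by field_simp, sin_pi_div_two,
      mul_one]
  · rfl

theorem gg_of_mem_Icc (hκ : 0 < κ) (h : lam ∈ Icc (1 / (2 * κ)) (1 / κ)) :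
    gg κ lam = 1 / 2 * sin (π * κ * lam) := by
  rw [gg]
  split_ifs with h₁ h₂
  · rw [le_antisymm h.2 h₁, show π * κ * (1 / κ) = π by field_simp, sin_pi, mul_zero]
  · rfl
  · exact absurd h.1 h₂

theorem gg_of_ge (h : 1 / κ ≤ lam) : gg κ lam = 0 := by
  rw [gg, if_pos h]

end FilterFunctions

section FlagState

variable {κ : ℝ}

theorem lipschitzWith_ff (hκ : 0 < κ) : LipschitzWith (Real.toNNReal (π * κ / 2)) (ff κ) := by
  refine LipschitzWith.of_Iic_Icc_Ici (a := 1 / (2 * κ)) (b := 1 / κ)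
    (by gcongr; linarith) ?_ ?_ ?_ <;>
    refine LipschitzOnWith.of_dist_le' fun a ha b hb => ?_
  · rw [ff_of_le hκ ha, ff_of_le hκ hb, dist_self]
    positivity
  · rw [ff_of_mem_Icc hκ ha, ff_of_mem_Icc hκ hb, Real.dist_eq, Real.dist_eq]
    convert lipschitzWith_cos.abs_mul_comp_mul_sub_le (-(1 / 2)) (π * κ) a b using 1
    rw [abs_neg, abs_of_pos (by positivity : (0 : ℝ) < π * κ)]
    ring
  · have hκa : 1 ≤ κ * a := by rw [← div_le_iff₀' hκ]; exact ha
    have hκb : 1 ≤ κ * b := by rw [← div_le_iff₀' hκ]; exact hb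
    rw [ff_of_ge ha, ff_of_ge hb, Real.dist_eq, Real.dist_eq, ← sub_div, abs_div, abs_two]
    calc |(κ * a)⁻¹ - (κ * b)⁻¹| / 2 ≤ |κ * a - κ * b| / 2 := by
          gcongr ?_ / 2; exact abs_inv_sub_inv_le_of_one_le hκa hκb
      _ = κ / 2 * |a - b| := by rw [← mul_sub, abs_mul, abs_of_pos hκ]; ring
      _ ≤ π * κ / 2 * |a - b| := by
          gcongr
          nlinarith [pi_gt_three]

theorem lipschitzWith_gg (hκ : 0 < κ) : LipschitzWith (Real.toNNReal (π * κ / 2)) (gg κ) := by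
  refine LipschitzWith.of_Iic_Icc_Ici (a := 1 / (2 * κ)) (b := 1 / κ)
    (by gcongr; linarith) ?_ ?_ ?_ <;>
    refine LipschitzOnWith.of_dist_le' fun a ha b hb => ?_
  · rw [gg_of_le hκ ha, gg_of_le hκ hb, dist_self]
    positivity
  · rw [gg_of_mem_Icc hκ ha, gg_of_mem_Icc hκ hb, Real.dist_eq, Real.dist_eq]
    convert lipschitzWith_sin.abs_mul_comp_mul_sub_le (1 / 2) (π * κ) a b using 1
    rw [abs_of_pos (by positivity : (0 : ℝ) < π * κ), abs_of_pos (by norm_num : (0 : ℝ) < 1 / 2)]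
    ring
  · rw [gg_of_ge ha, gg_of_ge hb, dist_self]
    positivity

theorem ff_sq_add_gg_sq (hκ : 0 < κ) (lam : ℝ) :
    ff κ lam ^ 2 + gg κ lam ^ 2 = (max (κ * lam) 1)⁻¹ ^ 2 / 4 := by
  rcases le_or_gt (1 / κ) lam with h₃ | h₃
  · have hκlam : 1 ≤ κ * lam := by rw [← div_le_iff₀' hκ]; exact h₃
    rw [ff_of_ge h₃, gg_of_ge h₃, max_eq_left hκlam]
    ring
  have hκlam : κ * lam ≤ 1 := by rw [← le_div_iff₀' hκ]; exact h₃.le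
  rw [max_eq_right hκlam]
  rcases le_or_gt lam (1 / (2 * κ)) with h₁ | h₁
  · rw [ff_of_le hκ h₁, gg_of_le hκ h₁]
    norm_num
  · rw [ff_of_mem_Icc hκ ⟨h₁.le, h₃.le⟩, gg_of_mem_Icc hκ ⟨h₁.le, h₃.le⟩]
    linear_combination (1 / 4 : ℝ) * cos_sq_add_sin_sq (π * κ * lam)

theorem ff_sq_add_gg_sq_le (hκ : 0 < κ) (lam : ℝ) : ff κ lam ^ 2 + gg κ lam ^ 2 ≤ 1 / 4 := by
  rw [ff_sq_add_gg_sq hκ]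
  have h : (max (κ * lam) 1)⁻¹ ≤ 1 := inv_le_one_of_one_le₀ (le_max_right _ _)
  have h' : 0 ≤ (max (κ * lam) 1)⁻¹ := inv_nonneg.2 (zero_le_one.trans (le_max_right _ _))
  nlinarith

theorem lipschitzWith_ff_sq_add_gg_sq (hκ : 0 < κ) :
    LipschitzWith (Real.toNNReal (κ / 2)) (fun lam => ff κ lam ^ 2 + gg κ lam ^ 2) := by
  refine LipschitzWith.of_dist_le' fun a b => ?_
  rw [ff_sq_add_gg_sq hκ, ff_sq_add_gg_sq hκ, Real.dist_eq, Real.dist_eq, ← sub_div, abs_div,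
    abs_of_pos (four_pos : (0 : ℝ) < 4)]
  calc |(max (κ * a) 1)⁻¹ ^ 2 - (max (κ * b) 1)⁻¹ ^ 2| / 4
      ≤ 2 * |max (κ * a) 1 - max (κ * b) 1| / 4 := by
        gcongr ?_ / 4
        exact abs_inv_sq_sub_inv_sq_le_of_one_le (le_max_right _ _) (le_max_right _ _)
    _ ≤ 2 * |κ * a - κ * b| / 4 := by
        gcongr 2 * ?_ / 4; exact abs_max_sub_max_le_abs (κ * a) (κ * b) 1
    _ = κ / 2 * |a - b| := by rw [← mul_sub, abs_mul, abs_of_pos hκ]; ring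

theorem norm_hvec (hκ : 0 < κ) (lam : ℝ) : ‖hvec κ lam‖ = 1 := by
  have h := ff_sq_add_gg_sq_le hκ lam
  rw [← pow_eq_one_iff_of_nonneg (norm_nonneg _) two_ne_zero, EuclideanSpace.real_norm_sq_eq,
    Fin.sum_univ_three]
  simp [hvec, Real.sq_sqrt (by linarith : (0 : ℝ) ≤ 1 - ff κ lam ^ 2 - gg κ lam ^ 2)]

theorem norm_hvec_sub_hvec_sq (a b : ℝ) :
    ‖hvec κ a - hvec κ b‖ ^ 2 = (ff κ a - ff κ b) ^ 2 + (gg κ a - gg κ b) ^ 2 +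
      (√(1 - ff κ a ^ 2 - gg κ a ^ 2) - √(1 - ff κ b ^ 2 - gg κ b ^ 2)) ^ 2 := by
  rw [EuclideanSpace.real_norm_sq_eq, Fin.sum_univ_three]
  simp [hvec]

end FlagState

theorem stmt_15_general (κ : ℝ) (hκ : 1 ≤ κ) (lam₁ lam₂ : ℝ) :
    1 - (6 * Real.pi ^ 2 + 1) / 24 * κ ^ 2 * (lam₁ - lam₂) ^ 2 ≤
      ⟪hvec κ lam₁, hvec κ lam₂⟫ := by
  have hκ0 : 0 < κ := by linarith
  have hf := (lipschitzWith_ff hκ0).sub_sq_le lam₁ lam₂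
  have hg := (lipschitzWith_gg hκ0).sub_sq_le lam₁ lam₂
  have hF := (lipschitzWith_ff_sq_add_gg_sq hκ0).sub_sq_le lam₁ lam₂
  rw [Real.coe_toNNReal _ (by positivity)] at hf hg hF
  have hs := sq_sqrt_sub_sqrt_le (c := 3 / 4) (u := 1 - ff κ lam₁ ^ 2 - gg κ lam₁ ^ 2)
    (v := 1 - ff κ lam₂ ^ 2 - gg κ lam₂ ^ 2) (by norm_num)
    (by linarith [ff_sq_add_gg_sq_le hκ0 lam₁]) (by linarith [ff_sq_add_gg_sq_le hκ0 lam₂])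
  rw [real_inner_eq_one_sub_norm_sub_sq_div_two (norm_hvec hκ0 _) (norm_hvec hκ0 _),
    norm_hvec_sub_hvec_sq]
  linear_combination (hf + hg + hs) / 2 + hF / 6

theorem stmt_15 (κ : ℝ) (hκ : 1 ≤ κ) (lam₁ lam₂ : ℝ)
    (h₁ : lam₁ ∈ Set.Icc (0 : ℝ) 1) (h₂ : lam₂ ∈ Set.Icc (0 : ℝ) 1) :
    1 - (6 * Real.pi ^ 2 + 1) / 24 * κ ^ 2 * (lam₁ - lam₂) ^ 2 ≤
      ⟪hvec κ lam₁, hvec κ lam₂⟫ :=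
  stmt_15_general κ hκ lam₁ lam₂
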